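/- arXiv:2109.07328 — 4 statements merged into one kernel-verified Lean document; each statement's English description precedes it below -/
import Mathlib

section
/- For each positive integer k, s(M_k) = μ_k, where M_k = 2^k - 1 and μ_k = 3·M_k + 2 = 2^(k+1) + 2^k - 1. -/
/-- `Alist k` is the list `A_{k+1}`: `A_1 = [5]`, `A_{k+1} = A_k ++ A_k ++ [1]`. -/
def Alist : ℕ → List ℕ
  | 0 => [5]
  | k+1 => Alist k ++ Alist k ++ [1]

/-- `aseq n` is the `n`-th term (1-indexed) of the limit of the lists `A_k`;
`aseq 0 = 0` by convention. -/
def aseq (n : ℕ) : ℕ := (Alist n).getD (n - 1) 0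

/-- Partial sums: `s n = a_1 + ⋯ + a_n`, `s 0 = 0`. -/
def s (n : ℕ) : ℕ := ∑ i ∈ Finset.Icc 1 n, aseq i

/-! Since `A_{k+1}` is a prefix of `A_{k+2}`, the first `2^(k+1) - 1` terms of the sequence are
exactly the list `A_{k+1}`, so `s(M_{k+1})` is the sum of that list. Length and sum both double
and gain one at each step, which preserves the relation `sum = 3 · length + 2` seen in `A_1 = [5]`. -/

theorem List.sum_range_getD {M : Type*} [AddCommMonoid M] (l : List M) :
    ∑ i ∈ Finset.range l.length, l.getD i 0 = l.sum := by
  induction l with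
  | nil => simp
  | cons a l ih =>
    rw [List.length_cons, Finset.sum_range_succ', List.sum_cons, ← ih, add_comm]
    simp only [List.getD_cons_succ, List.getD_cons_zero]

theorem List.IsPrefix.getD_eq {α : Type*} {l₁ l₂ : List α} (h : l₁ <+: l₂) {i : ℕ}
    (hi : i < l₁.length) (d : α) : l₁.getD i d = l₂.getD i d := by
  rw [List.getD_eq_getElem _ _ hi, List.getD_eq_getElem _ _ (hi.trans_le h.length_le),
    h.getElem hi]

theorem Alist_length (k : ℕ) : (Alist k).length = 2 ^ (k + 1) - 1 := by
  induction k with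
  | zero => rfl
  | succ k ih =>
    have : 1 ≤ 2 ^ (k + 1) := Nat.one_le_two_pow
    simp only [Alist, List.length_append, ih, List.length_singleton, pow_succ]
    omega

theorem Alist_sum (k : ℕ) : (Alist k).sum = 3 * (Alist k).length + 2 := by
  induction k with
  | zero => rfl
  | succ k ih =>
    simp only [Alist, List.sum_append, List.length_append, ih, List.sum_singleton,
      List.length_singleton]
    ring

theorem Alist_isPrefix_of_le {j k : ℕ} (h : j ≤ k) : Alist j <+: Alist k := by
  induction k, h using Nat.le_induction with
  | base => exact List.prefix_refl _
  | succ k _ ih => exact ih.trans ⟨Alist k ++ [1], by rw [Alist, List.append_assoc]⟩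

theorem lt_length_Alist (n : ℕ) : n < (Alist n).length := by
  rw [Alist_length]
  have := Nat.lt_two_pow_self (n := n + 1)
  omega

theorem aseq_succ_eq_getD_Alist {k i : ℕ} (hi : i < (Alist k).length) :
    aseq (i + 1) = (Alist k).getD i 0 := by
  rw [aseq, Nat.add_sub_cancel]
  rcases le_total (i + 1) k with h | h
  · exact (Alist_isPrefix_of_le h).getD_eq ((lt_length_Alist i).trans_le
      (Alist_isPrefix_of_le i.le_succ).length_le) 0
  · exact ((Alist_isPrefix_of_le h).getD_eq hi 0).symm

theorem s_length_Alist (k : ℕ) : s (Alist k).length = (Alist k).sum := by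
  rw [s, ← Finset.Ico_add_one_right_eq_Icc, Finset.sum_Ico_eq_sum_range, Nat.add_sub_cancel,
    ← List.sum_range_getD]
  refine Finset.sum_congr rfl fun i hi => ?_
  rw [add_comm 1 i, aseq_succ_eq_getD_Alist (Finset.mem_range.mp hi)]

/-- For each positive integer `k`, `s(M_k) = μ_k = 3·M_k + 2`. -/
theorem s_mersenne (k : ℕ) (hk : 1 ≤ k) :
    s (2 ^ k - 1) = 3 * (2 ^ k - 1) + 2 := by
  obtain ⟨j, rfl⟩ := Nat.exists_eq_add_of_le' hk
  rw [← Alist_length, s_length_Alist, Alist_sum]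
end

section
/- For each positive integer k, s(k) ≥ 2·s(r(k)), where r(k) is the reduction of k. -/
/-- The largest `ℓ` with `2^ℓ - 1 ≤ n` (for `n ≥ 1`). -/
def maxM (n : ℕ) : ℕ := Nat.findGreatest (fun ℓ => 2 ^ ℓ - 1 ≤ n) n

/-- `Mdig n i` is the digit `ε_i` in the greedy M-expansion
`n = ε_1·M_1 + ⋯ + ε_ℓ·M_ℓ` (with `M_i = 2^i - 1`): repeatedly subtract the
largest Mersenne number `M_ℓ ≤ n`, recording a digit `2` if the remainder
equals `M_ℓ` again. -/
def Mdig (n : ℕ) : ℕ → ℕ :=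
  if h : n = 0 then fun _ => 0
  else
    let ℓ := maxM n
    let r := n - (2 ^ ℓ - 1)
    if r = 2 ^ ℓ - 1 then fun i => if i = ℓ then 2 else 0
    else fun i => (if i = ℓ then 1 else 0) + Mdig r i
termination_by n
decreasing_by
  have h1 : 1 ≤ maxM n :=
    Nat.le_findGreatest (Nat.one_le_iff_ne_zero.mpr h) (by simpa using Nat.one_le_iff_ne_zero.mpr h)
  have h2 : 2 ≤ 2 ^ maxM n := by
    calc (2 : ℕ) = 2 ^ 1 := rfl
    _ ≤ 2 ^ maxM n := Nat.pow_le_pow_right (by norm_num) h1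
  have h3 : 1 ≤ n := Nat.one_le_iff_ne_zero.mpr h
  omega

/-- Sum of the M-digits of `n` (all nonzero digits have index `≤ n`). -/
def sigmaM (n : ℕ) : ℕ := ∑ i ∈ Finset.Icc 1 n, Mdig n i

/-- The reduction `r(k) = ε_2·M_1 + ε_3·M_2 + ⋯`: the integer whose M-digit
list is the left shift of that of `k` (so `r 1 = r 2 = 0`). -/
def reduce (k : ℕ) : ℕ := ∑ i ∈ Finset.Icc 1 k, Mdig k (i + 1) * (2 ^ i - 1)


/-!
Since `A_{ℓ+1} = A_ℓ A_ℓ 1` and `A_ℓ` has length `M_ℓ`, the sequence repeats itself after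
position `M_ℓ`, so `s (M_ℓ + x) = s M_ℓ + s x` for `x ≤ M_ℓ`; in particular
`2 s(M_ℓ) = s(2 M_ℓ) ≤ s(M_{ℓ+1})`. The greedy expansion writes `k = M_{ℓ+1} + t` with
`t ≤ M_{ℓ+1}`, and then `r(k) = M_ℓ + r(t)`, where `2 r(t) ≤ t` forces `r(t) ≤ M_ℓ`. Hence
`2 s(r(k)) = 2 s(M_ℓ) + 2 s(r(t)) ≤ s(M_{ℓ+1}) + s(t) = s(k)`, by induction on `k`.
-/

lemma Alist_succ (m : ℕ) : Alist (m + 1) = Alist m ++ (Alist m ++ [1]) := by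
  rw [Alist, List.append_assoc]

lemma length_Alist (m : ℕ) : (Alist m).length = mersenne (m + 1) := by
  induction m with
  | zero => rfl
  | succ m ih =>
    simp only [Alist_succ, List.length_append, List.length_singleton, ih, mersenne_succ (m + 1)]
    ring

lemma Alist_prefix {m n : ℕ} (h : m ≤ n) : Alist m <+: Alist n := by
  induction h with
  | refl => exact List.prefix_refl _
  | step _ ih => exact ih.trans (by rw [Alist_succ]; exact List.prefix_append _ _)

lemma getD_Alist_of_le {m n i : ℕ} (h : m ≤ n) (hi : i < (Alist m).length) :
    (Alist n).getD i 0 = (Alist m).getD i 0 := by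
  obtain ⟨t, ht⟩ := Alist_prefix h
  rw [← ht, List.getD_append _ _ _ _ hi]

lemma lt_mersenne_succ (n : ℕ) : n < mersenne (n + 1) := by
  have := Nat.lt_two_pow_self (n := n)
  rw [mersenne_succ]; unfold mersenne; omega

lemma aseq_eq_getD {m n : ℕ} (hn : n ≤ mersenne (m + 1)) :
    aseq n = (Alist m).getD (n - 1) 0 := by
  have hpos : 0 < mersenne (m + 1) := mersenne_pos.mpr m.succ_pos
  rcases le_total n m with h | h
  · have := lt_mersenne_succ n
    exact (getD_Alist_of_le h (by rw [length_Alist]; omega)).symm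
  · exact getD_Alist_of_le h (by rw [length_Alist]; omega)

lemma aseq_mersenne_add {ℓ j : ℕ} (hj : 1 ≤ j) (hjℓ : j ≤ mersenne ℓ) :
    aseq (mersenne ℓ + j) = aseq j := by
  obtain _ | m := ℓ
  · rw [mersenne_zero] at hjℓ; omega
  have hlen := length_Alist m
  rw [aseq_eq_getD (m := m + 1) (by rw [mersenne_succ (m + 1)]; omega), aseq_eq_getD hjℓ,
    Alist_succ, List.getD_append_right _ _ _ _ (by omega),
    List.getD_append _ _ _ _ (by omega), hlen]
  congr 1
  omega

lemma s_succ (n : ℕ) : s (n + 1) = s n + aseq (n + 1) :=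
  Finset.sum_Icc_succ_top (by omega) _

lemma s_mono : Monotone s := fun _ _ h =>
  Finset.sum_le_sum_of_subset (Finset.Icc_subset_Icc_right h)

lemma s_mersenne_add {ℓ x : ℕ} (hx : x ≤ mersenne ℓ) :
    s (mersenne ℓ + x) = s (mersenne ℓ) + s x := by
  induction x with
  | zero => rfl
  | succ y ih =>
    rw [← add_assoc, s_succ, s_succ, ih (by omega), add_assoc (mersenne ℓ) y 1,
      aseq_mersenne_add (by omega) hx, add_assoc]

lemma two_mul_s_mersenne_le (m : ℕ) : 2 * s (mersenne m) ≤ s (mersenne (m + 1)) :=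
  calc 2 * s (mersenne m) = s (mersenne m + mersenne m) := by rw [s_mersenne_add le_rfl, two_mul]
    _ ≤ s (mersenne (m + 1)) := s_mono (by rw [mersenne_succ]; omega)

lemma maxM_le (n : ℕ) : maxM n ≤ n := Nat.findGreatest_le n

lemma mersenne_maxM_le (n : ℕ) : mersenne (maxM n) ≤ n :=
  Nat.findGreatest_spec (P := fun ℓ => 2 ^ ℓ - 1 ≤ n) (Nat.zero_le n) (by simp)

lemma lt_mersenne_maxM_succ (n : ℕ) : n < mersenne (maxM n + 1) := by
  rcases Nat.lt_or_ge n (maxM n + 1) with h | h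
  · have hmax : maxM n = n := le_antisymm (maxM_le n) (by omega)
    rw [hmax]
    exact lt_mersenne_succ n
  · exact not_le.mp (Nat.findGreatest_is_greatest (P := fun ℓ => 2 ^ ℓ - 1 ≤ n)
      (Nat.lt_succ_self (maxM n)) h)

lemma maxM_eq_zero_iff {n : ℕ} : maxM n = 0 ↔ n = 0 := by
  refine ⟨fun h => ?_, fun h => h ▸ Nat.findGreatest_zero⟩
  have := lt_mersenne_maxM_succ n
  rw [h] at this
  exact Nat.lt_one_iff.mp this

lemma maxM_mersenne (ℓ : ℕ) : maxM (mersenne ℓ) = ℓ :=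
  le_antisymm (mersenne_le_mersenne.mp (mersenne_maxM_le _))
    (Nat.lt_succ_iff.mp (mersenne_lt_mersenne.mp (lt_mersenne_maxM_succ _)))

lemma Mdig_zero : Mdig 0 = 0 := by
  rw [Mdig]; rfl

lemma Mdig_of_ne_zero {n : ℕ} (hn : n ≠ 0) : Mdig n =
    if n - mersenne (maxM n) = mersenne (maxM n) then fun i => if i = maxM n then 2 else 0
    else fun i => (if i = maxM n then 1 else 0) + Mdig (n - mersenne (maxM n)) i := by
  rw [Mdig, dif_neg hn]; rfl

lemma Mdig_mersenne {ℓ : ℕ} (hℓ : ℓ ≠ 0) (i : ℕ) :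
    Mdig (mersenne ℓ) i = if i = ℓ then 1 else 0 := by
  have hpos : mersenne ℓ ≠ 0 := (mersenne_pos.mpr (Nat.pos_of_ne_zero hℓ)).ne'
  rw [Mdig_of_ne_zero hpos, maxM_mersenne, Nat.sub_self, if_neg hpos.symm, Mdig_zero]
  rfl

/-- The digit-`2` branch of the greedy expansion is subsumed, as `M_ℓ` has the single digit
`ε_ℓ = 1`. -/
lemma Mdig_eq_add {n : ℕ} (hn : n ≠ 0) (i : ℕ) :
    Mdig n i = (if i = maxM n then 1 else 0) + Mdig (n - mersenne (maxM n)) i := by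
  rw [Mdig_of_ne_zero hn]
  by_cases h : n - mersenne (maxM n) = mersenne (maxM n)
  · rw [if_pos h, h, Mdig_mersenne (mt maxM_eq_zero_iff.mp hn)]
    split_ifs <;> rfl
  · rw [if_neg h]

lemma Mdig_eq_zero_of_lt {n i : ℕ} (h : n < i) : Mdig n i = 0 := by
  induction n using Nat.strong_induction_on with
  | _ n ih =>
    rcases eq_or_ne n 0 with rfl | hn
    · rw [Mdig_zero]; rfl
    have := maxM_le n
    have : 0 < mersenne (maxM n) :=
      mersenne_pos.mpr (Nat.pos_of_ne_zero (mt maxM_eq_zero_iff.mp hn))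
    rw [Mdig_eq_add hn, if_neg (by omega), ih _ (by omega) (by omega)]

lemma reduce_eq_sum_of_le {k N : ℕ} (h : k ≤ N) :
    reduce k = ∑ i ∈ Finset.Icc 1 N, Mdig k (i + 1) * mersenne i :=
  Finset.sum_subset (Finset.Icc_subset_Icc_right h) fun i hiN hik => by
    rw [Mdig_eq_zero_of_lt (by simp only [Finset.mem_Icc] at hiN hik; omega), zero_mul]

lemma reduce_eq_add {k m : ℕ} (hm : maxM k = m + 1) :
    reduce k = mersenne m + reduce (k - mersenne (m + 1)) := by
  have hk : k ≠ 0 := fun h => by simp [maxM_eq_zero_iff.mpr h] at hm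
  have hmk : m + 1 ≤ k := hm ▸ maxM_le k
  rw [reduce_eq_sum_of_le le_rfl, reduce_eq_sum_of_le (Nat.sub_le k _)]
  simp only [Mdig_eq_add hk, hm, add_mul, Finset.sum_add_distrib, add_left_inj, ite_mul, one_mul,
    zero_mul, Finset.sum_ite_eq']
  split_ifs with h
  · rfl
  · simp only [Finset.mem_Icc, not_and_or] at h
    obtain rfl : m = 0 := by omega
    rfl

lemma two_mul_reduce_le (n : ℕ) : 2 * reduce n ≤ n := by
  induction n using Nat.strong_induction_on with
  | _ n ih =>
    rcases hm : maxM n with _ | m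
    · rw [maxM_eq_zero_iff.mp hm]; rfl
    have hle : mersenne (m + 1) ≤ n := hm ▸ mersenne_maxM_le n
    have hpos : 0 < mersenne (m + 1) := mersenne_pos.mpr m.succ_pos
    have := ih (n - mersenne (m + 1)) (by omega)
    have := mersenne_succ m
    rw [reduce_eq_add hm]
    omega

theorem s_ge_two_s_reduce_general (k : ℕ) :
    2 * s (reduce k) ≤ s k := by
  induction k using Nat.strong_induction_on with
  | _ k ih =>
    rcases hm : maxM k with _ | m
    · rw [maxM_eq_zero_iff.mp hm]; rfl
    have hle : mersenne (m + 1) ≤ k := hm ▸ mersenne_maxM_le k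
    have hlt : k < mersenne (m + 1 + 1) := hm ▸ lt_mersenne_maxM_succ k
    have hpos : 0 < mersenne (m + 1) := mersenne_pos.mpr m.succ_pos
    have hM := mersenne_succ m
    have hM' := mersenne_succ (m + 1)
    set r := k - mersenne (m + 1)
    have hk : k = mersenne (m + 1) + r := by omega
    have hr : r ≤ mersenne (m + 1) := by omega
    have hred : reduce r ≤ mersenne m := by
      have := two_mul_reduce_le r
      omega
    calc 2 * s (reduce k) = 2 * s (mersenne m) + 2 * s (reduce r) := by
          rw [reduce_eq_add hm, s_mersenne_add hred, mul_add]
      _ ≤ s (mersenne (m + 1)) + s r := add_le_add (two_mul_s_mersenne_le m) (ih r (by omega))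
      _ = s k := by rw [← s_mersenne_add hr, ← hk]

/-- For each positive integer `k`, `s(k) ≥ 2·s(r(k))`. -/
theorem s_ge_two_s_reduce (k : ℕ) (hk : 1 ≤ k) :
    2 * s (reduce k) ≤ s k :=
  s_ge_two_s_reduce_general k
end

section
/- Let h ≥ 1 and let f = {f_0, f_1, ..., f_h} be a symmetric pebbling configuration on the complete binary tree T^h of height h, i.e., f_i pebbles on each vertex of level i. Let n(f) = Σ_{i=0}^h 2^i f_i be the total number of pebbles and c(f) = Σ_{i=0}^h f_i. If f can deliver a pebble to every leaf of T^h via pebbling moves, then 3·n(f) − c(f) ≥ 2^{h+1}. -/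
/-!
Weigh a pebble on `w` by `2 ^ (-d w)`, where `d w` is the distance from `w` to the leftmost
leaf `2 ^ h`. A move removes two pebbles from `u` and adds one on a neighbour `v`, with
`d v ≥ d u - 1`, so the total weight never increases; a configuration with a pebble on the leaf
has weight at least `1`. The level sums of `2 ^ (-d w)` are `(3 · 2 ^ i - 1) / 2 ^ (h + 1)`: from
level `i` to level `i + 1` the weight of every vertex off the spine `1, 2, 4, …` is split evenly
between its two children, while the children of `2 ^ i` weigh `2 ^ (i + 1 - h)` and
`2 ^ (i - 1 - h)`. Hence the symmetric configuration weighs `(3 n(f) - c(f)) / 2 ^ (h + 1)`.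
-/

/-- Vertices of the complete binary tree `T^h` of height `h` are the heap
indices `1 ≤ v < 2^(h+1)`; the root is `1`, the vertices at level `i` are
those with `2^i ≤ v < 2^(i+1)`, and the parent of `v` is `v / 2`.
A pebbling move removes two pebbles from a vertex `u` and places one pebble
on an adjacent vertex `v`. -/
def PebMove (h : ℕ) (f g : ℕ → ℕ) : Prop :=
  ∃ u v : ℕ, (1 ≤ u ∧ u < 2 ^ (h + 1)) ∧ (1 ≤ v ∧ v < 2 ^ (h + 1)) ∧
    (u = v / 2 ∨ v = u / 2) ∧ 2 ≤ f u ∧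
    g = fun w => if w = u then f u - 2 else if w = v then f v + 1 else f w

open Finset

lemma sum_Ico_two_mul {M : Type*} [AddCommMonoid M] (F : ℕ → M) {a b : ℕ} (hab : a ≤ b) :
    ∑ w ∈ Ico (2 * a) (2 * b), F w = ∑ c ∈ Ico a b, (F (2 * c) + F (2 * c + 1)) := by
  induction b, hab using Nat.le_induction with
  | base => simp
  | succ b hab ih =>
    rw [sum_Ico_succ_top hab, ← ih, show 2 * (b + 1) = 2 * b + 1 + 1 by ring,
      sum_Ico_succ_top (by omega), sum_Ico_succ_top (by omega), add_assoc]

lemma sum_Ico_one_two_pow_eq_sum_levels {M : Type*} [AddCommMonoid M] (F : ℕ → M) (n : ℕ) :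
    ∑ w ∈ Ico 1 (2 ^ (n + 1)), F w =
      ∑ i ∈ range (n + 1), ∑ w ∈ Ico (2 ^ i) (2 ^ (i + 1)), F w := by
  induction n with
  | zero => simp
  | succ n ih =>
    rw [sum_range_succ, ← ih, sum_Ico_consecutive _ Nat.one_le_two_pow
      (Nat.pow_le_pow_right two_pos (by omega))]

def liquidValue (h : ℕ) (d g : ℕ → ℕ) : ℚ :=
  ∑ w ∈ Ico 1 (2 ^ (h + 1)), g w * (1 / 2) ^ d w

section LiquidValue

variable {h : ℕ} {d : ℕ → ℕ}

lemma liquidValue_le_of_pebMove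
    (hd : ∀ w, 2 ≤ w → d (w / 2) ≤ d w + 1 ∧ d w ≤ d (w / 2) + 1) {f g : ℕ → ℕ}
    (hfg : PebMove h f g) : liquidValue h d g ≤ liquidValue h d f := by
  obtain ⟨u, v, hu, hv, hadj, hfu, rfl⟩ := hfg
  have huv : u ≠ v := by rcases hadj with rfl | rfl <;> omega
  have hduv : d u ≤ d v + 1 := by
    rcases hadj with rfl | rfl
    exacts [(hd v (by omega)).1, (hd u (by omega)).2]
  have hcast : ∀ w, ((if w = u then f u - 2 else if w = v then f v + 1 else f w : ℕ) : ℚ) =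
      f w - 2 * (if w = u then 1 else 0) + (if w = v then 1 else 0) := by
    intro w
    split_ifs <;> subst_vars
    · exact absurd rfl huv
    · push_cast [Nat.cast_sub hfu]; ring
    · push_cast; ring
    · ring
  have hpow : (1 / 2 : ℚ) ^ d v ≤ 2 * (1 / 2) ^ d u := by
    have := pow_le_pow_of_le_one (a := (1 / 2 : ℚ)) (by norm_num) (by norm_num) hduv
    rw [pow_succ] at this
    linarith
  unfold liquidValue
  simp only [hcast, add_mul, sub_mul, sum_add_distrib, sum_sub_distrib, mul_assoc, ite_mul,
    one_mul, zero_mul, ← mul_sum, sum_ite_eq', mem_Ico, hu, hv, and_self, if_true]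
  linarith

lemma liquidValue_le_of_reflTransGen
    (hd : ∀ w, 2 ≤ w → d (w / 2) ≤ d w + 1 ∧ d w ≤ d (w / 2) + 1) {f g : ℕ → ℕ}
    (hfg : Relation.ReflTransGen (PebMove h) f g) : liquidValue h d g ≤ liquidValue h d f := by
  induction hfg with
  | refl => exact le_rfl
  | tail _ hstep ih => exact (liquidValue_le_of_pebMove hd hstep).trans ih

lemma one_le_liquidValue {g : ℕ → ℕ} {t : ℕ} (ht : 1 ≤ t ∧ t < 2 ^ (h + 1))
    (hdt : d t = 0) (hgt : 1 ≤ g t) : 1 ≤ liquidValue h d g := by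
  calc (1 : ℚ) ≤ g t * (1 / 2) ^ d t := by rw [hdt, pow_zero, mul_one]; exact_mod_cast hgt
    _ ≤ liquidValue h d g :=
      single_le_sum (f := fun w => (g w : ℚ) * (1 / 2) ^ d w) (fun w _ => by positivity)
        (mem_Ico.2 ht)

end LiquidValue

/-- The distance in `T^h` from `w` to the leftmost leaf `2^h`: the powers of two form the path
from the root to that leaf, and any other vertex reaches it through its parent.
The guard `w = 0` only makes the recursion terminate. -/
def leftLeafDist (h w : ℕ) : ℕ :=
  if hw : w = 0 ∨ 2 ^ Nat.log 2 w = w then h - Nat.log 2 w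
  else leftLeafDist h (w / 2) + 1
decreasing_by omega

section LeftLeafDist

variable {h : ℕ}

lemma leftLeafDist_two_pow (h i : ℕ) : leftLeafDist h (2 ^ i) = h - i := by
  rw [leftLeafDist, Nat.log_pow one_lt_two, dif_pos (Or.inr rfl)]

lemma leftLeafDist_of_ne_two_pow {w : ℕ} (hw : w ≠ 0) (hpow : 2 ^ Nat.log 2 w ≠ w) :
    leftLeafDist h w = leftLeafDist h (w / 2) + 1 := by
  rw [leftLeafDist, dif_neg (by tauto)]

lemma leftLeafDist_div_two_bounds {w : ℕ} (hw : 2 ≤ w) :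
    leftLeafDist h (w / 2) ≤ leftLeafDist h w + 1 ∧
      leftLeafDist h w ≤ leftLeafDist h (w / 2) + 1 := by
  by_cases hpow : 2 ^ Nat.log 2 w = w
  · have hk : 1 ≤ Nat.log 2 w := Nat.le_log_of_pow_le one_lt_two (by omega)
    obtain ⟨k, rfl⟩ : ∃ k, w = 2 ^ (k + 1) :=
      ⟨Nat.log 2 w - 1, by rw [Nat.sub_add_cancel hk, hpow]⟩
    rw [pow_succ, Nat.mul_div_cancel _ two_pos, ← pow_succ, leftLeafDist_two_pow,
      leftLeafDist_two_pow]
    omega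
  · rw [leftLeafDist_of_ne_two_pow (by omega) hpow]
    omega

lemma leftLeafDist_two_mul_add_one {c : ℕ} (hc : c ≠ 0) :
    leftLeafDist h (2 * c + 1) = leftLeafDist h c + 1 := by
  rw [leftLeafDist_of_ne_two_pow (by omega), show (2 * c + 1) / 2 = c by omega]
  intro heven
  have hlog : 1 ≤ Nat.log 2 (2 * c + 1) := Nat.le_log_of_pow_le one_lt_two (by omega)
  have : 2 ∣ 2 ^ Nat.log 2 (2 * c + 1) := dvd_pow_self 2 (by omega)
  omega

lemma leftLeafDist_two_mul {c i : ℕ} (hlo : 2 ^ i < c) (hhi : c < 2 ^ (i + 1)) :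
    leftLeafDist h (2 * c) = leftLeafDist h c + 1 := by
  have hlog : Nat.log 2 (2 * c) = i + 1 :=
    Nat.log_eq_of_pow_le_of_lt_pow (by rw [pow_succ']; omega) (by rw [pow_succ']; omega)
  rw [leftLeafDist_of_ne_two_pow (by omega) (by rw [hlog, pow_succ']; omega),
    Nat.mul_div_cancel_left c two_pos]

lemma sum_level_leftLeafDist {i : ℕ} (hi : i ≤ h) :
    ∑ w ∈ Ico (2 ^ i) (2 ^ (i + 1)), (1 / 2 : ℚ) ^ leftLeafDist h w =
      (3 * 2 ^ i - 1) / 2 ^ (h + 1) := by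
  induction i with
  | zero =>
    have hroot := leftLeafDist_two_pow h 0
    rw [pow_zero, Nat.sub_zero] at hroot
    simp only [pow_zero, zero_add, pow_one, Nat.Ico_succ_singleton, sum_singleton, hroot,
      one_div_pow]
    field_simp
    ring
  | succ i ih =>
    obtain ⟨k, rfl⟩ : ∃ k, h = i + 1 + k := ⟨h - (i + 1), by omega⟩
    have hchildren : ∀ c ∈ Ico (2 ^ i) (2 ^ (i + 1)),
        (1 / 2 : ℚ) ^ leftLeafDist (i + 1 + k) (2 * c) +
          (1 / 2 : ℚ) ^ leftLeafDist (i + 1 + k) (2 * c + 1) =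
        (1 / 2 : ℚ) ^ leftLeafDist (i + 1 + k) c +
          if c = 2 ^ i then 3 / 2 * (1 / 2) ^ (k + 1) else 0 := by
      intro c hc
      rw [mem_Ico] at hc
      rw [leftLeafDist_two_mul_add_one ((Nat.two_pow_pos i).trans_le hc.1).ne']
      split_ifs with hci
      · subst hci
        rw [← pow_succ', leftLeafDist_two_pow, leftLeafDist_two_pow,
          show i + 1 + k - (i + 1) = k by omega, show i + 1 + k - i = k + 1 by omega]
        ring
      · rw [leftLeafDist_two_mul (lt_of_le_of_ne hc.1 (Ne.symm hci)) hc.2]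
        ring
    have hpair := sum_Ico_two_mul (fun w => (1 / 2 : ℚ) ^ leftLeafDist (i + 1 + k) w)
      (Nat.pow_le_pow_right two_pos (Nat.le_succ i))
    rw [← pow_succ', ← pow_succ'] at hpair
    rw [hpair, sum_congr rfl hchildren, sum_add_distrib, sum_ite_eq',
      if_pos (mem_Ico.2 ⟨le_rfl, Nat.pow_lt_pow_succ one_lt_two⟩), ih (by omega), one_div_pow]
    field_simp
    ring

end LeftLeafDist

lemma liquidValue_leftLeafDist_symmetric (h : ℕ) (f : ℕ → ℕ) :
    liquidValue h (leftLeafDist h) (fun w => f (Nat.log2 w)) =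
      ((3 * ∑ i ∈ range (h + 1), 2 ^ i * f i - ∑ i ∈ range (h + 1), f i : ℕ) : ℚ) /
        2 ^ (h + 1) := by
  have hlevel : ∀ i ∈ range (h + 1), ∑ w ∈ Ico (2 ^ i) (2 ^ (i + 1)),
      (f (Nat.log2 w) : ℚ) * (1 / 2) ^ leftLeafDist h w =
        f i * ((3 * 2 ^ i - 1) / 2 ^ (h + 1)) := by
    intro i hi
    rw [← sum_level_leftLeafDist (Nat.lt_succ_iff.1 (mem_range.1 hi)), mul_sum]
    refine sum_congr rfl fun w hw => ?_
    rw [mem_Ico] at hw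
    rw [Nat.log2_eq_log_two, Nat.log_eq_of_pow_le_of_lt_pow hw.1 hw.2]
  have hcount : ∑ i ∈ range (h + 1), f i ≤ 3 * ∑ i ∈ range (h + 1), 2 ^ i * f i :=
    (sum_le_sum fun i _ => Nat.le_mul_of_pos_left (f i) (Nat.two_pow_pos i)).trans
      (Nat.le_mul_of_pos_left _ three_pos)
  unfold liquidValue
  rw [sum_Ico_one_two_pow_eq_sum_levels, sum_congr rfl hlevel, Nat.cast_sub hcount]
  push_cast
  rw [mul_sum, ← sum_sub_distrib, sum_div]
  exact sum_congr rfl fun i _ => by ring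

theorem liquid_necessary_condition_general (h : ℕ) (f : ℕ → ℕ)
    (hreach : ∀ v : ℕ, 2 ^ h ≤ v → v < 2 ^ (h + 1) →
      ∃ g : ℕ → ℕ,
        Relation.ReflTransGen (PebMove h) (fun w => f (Nat.log2 w)) g ∧ 1 ≤ g v) :
    2 ^ (h + 1) ≤
      3 * (∑ i ∈ Finset.range (h + 1), 2 ^ i * f i) -
        ∑ i ∈ Finset.range (h + 1), f i := by
  have hleaf : 2 ^ h < 2 ^ (h + 1) := Nat.pow_lt_pow_succ one_lt_two
  obtain ⟨g, hfg, hg⟩ := hreach (2 ^ h) le_rfl hleaf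
  have hvalue : 1 ≤ liquidValue h (leftLeafDist h) (fun w => f (Nat.log2 w)) :=
    (one_le_liquidValue ⟨Nat.one_le_two_pow, hleaf⟩
        (by rw [leftLeafDist_two_pow, Nat.sub_self]) hg).trans
      (liquidValue_le_of_reflTransGen (fun _ => leftLeafDist_div_two_bounds) hfg)
  rw [liquidValue_leftLeafDist_symmetric, le_div_iff₀ (by positivity), one_mul] at hvalue
  exact_mod_cast hvalue

/-- Let `f = {f_0, …, f_h}` be a symmetric pebbling configuration on `T^h`
(`f i` pebbles on each vertex of level `i`, i.e. the vertex `v` carries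
`f (Nat.log2 v)` pebbles).  If `f` can deliver a pebble to every leaf of `T^h`
by pebbling moves, then `3·n(f) − c(f) ≥ 2^{h+1}`, where
`n(f) = Σ 2^i·f_i` and `c(f) = Σ f_i`. -/
theorem liquid_necessary_condition (h : ℕ) (hh : 1 ≤ h) (f : ℕ → ℕ)
    (hreach : ∀ v : ℕ, 2 ^ h ≤ v → v < 2 ^ (h + 1) →
      ∃ g : ℕ → ℕ,
        Relation.ReflTransGen (PebMove h) (fun w => f (Nat.log2 w)) g ∧ 1 ≤ g v) :
    2 ^ (h + 1) ≤
      3 * (∑ i ∈ Finset.range (h + 1), 2 ^ i * f i) -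
        ∑ i ∈ Finset.range (h + 1), f i :=
  liquid_necessary_condition_general h f hreach
end

section
/- For the family h_k = 2^{k+1} + k − 1, the μ-expansion of 2^{h_k} satisfies φ(2^{h_k}) = 2^k, and consequently α(h_k) → −1 as k → ∞; hence liminf_{h→∞} α(h) = −1. -/
/-- `μ_i = 2^{i+1} + 2^i - 1`. -/
def mu (i : ℕ) : ℕ := 2 ^ (i + 1) + 2 ^ i - 1

/-- The largest `ℓ ≥ 1` with `μ_ℓ ≤ n` (`0` if there is none). -/
def maxMu (n : ℕ) : ℕ := Nat.findGreatest (fun ℓ => 0 < ℓ ∧ mu ℓ ≤ n) n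

/-- `mudig n i` is the digit `ε_i` in the greedy μ-expansion
`n = r + ε_1·μ_1 + ⋯ + ε_ℓ·μ_ℓ` with `r ∈ {0,…,4}`. -/
def mudig (n : ℕ) : ℕ → ℕ :=
  if _h : n ≤ 4 then fun _ => 0
  else
    let ℓ := maxMu n
    let r := n - mu ℓ
    if r = mu ℓ then fun i => if i = ℓ then 2 else 0
    else fun i => (if i = ℓ then 1 else 0) + mudig r i
termination_by n
decreasing_by
  have h1 : 1 ≤ maxMu n :=
    Nat.le_findGreatest (by omega) ⟨one_pos, by simp [mu]; omega⟩
  have h2 : 2 ≤ 2 ^ maxMu n := by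
    calc (2 : ℕ) = 2 ^ 1 := rfl
    _ ≤ 2 ^ maxMu n := Nat.pow_le_pow_right (by norm_num) h1
  have : 5 ≤ mu (maxMu n) := by simp [mu]; omega
  omega

/-- Sum of the μ-digits of `m`. -/
def phi (m : ℕ) : ℕ := ∑ i ∈ Finset.Icc 1 m, mudig m i

/-- `α(h) = (2·φ(2^h) − (h+2)) / log₂(h+2)`. -/
noncomputable def alphaF (h : ℕ) : ℝ :=
  (2 * (phi (2 ^ h) : ℝ) - (h + 2)) / Real.logb 2 (h + 2)

/-!
Since `μ_n = 3·2^n − 1`, one greedy step takes `2^(n+2) + j` to `2^n + (j + 1)` as long as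
`j` is small, contributing a single digit `1`. Starting from `2^h` the expansion therefore runs
down the exponents `h, h − 2, h − 4, …` until the offset is no longer small compared to the power,
which happens only near exponent `log₂ h`; this gives `2·φ(2^h) ≥ h − log₂ h − 1` and hence
`α(h) ≥ −1 − 3 / log₂(h+2)`. For `h_k = (k+1) + 2(2^k − 1)` the chain stops after `2^k − 1` steps
at exactly `2^(k+1) + 2^k − 1 = μ_k`, so `φ(2^{h_k}) = 2^k` and
`α(h_k) = −(k+1) / log₂(2^(k+1) + k + 1) → −1`.
-/
open Filter Topology

lemma mu_add_one_eq_three_mul_two_pow (i : ℕ) : mu i + 1 = 3 * 2 ^ i := by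
  have := Nat.one_le_two_pow (n := i)
  rw [mu, pow_succ]
  omega

lemma mu_succ (i : ℕ) : mu (i + 1) = 2 * mu i + 1 := by
  have := mu_add_one_eq_three_mul_two_pow i
  have := mu_add_one_eq_three_mul_two_pow (i + 1)
  rw [pow_succ] at this
  omega

lemma mu_strictMono : StrictMono mu :=
  strictMono_nat_of_lt_succ fun i => by rw [mu_succ]; omega

lemma lt_mu (i : ℕ) : i < mu i := by
  have := Nat.lt_two_pow_self (n := i)
  have := mu_add_one_eq_three_mul_two_pow i
  omega

lemma maxMu_eq_of_mu_le_of_lt {n ℓ : ℕ} (hℓ : 1 ≤ ℓ) (hlo : mu ℓ ≤ n) (hhi : n < mu (ℓ + 1)) :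
    maxMu n = ℓ :=
  Nat.findGreatest_eq_iff.2 ⟨(lt_mu ℓ).le.trans hlo, fun _ => ⟨hℓ, hlo⟩,
    fun _ hm _ hP => (hhi.trans_le (mu_strictMono.monotone hm)).not_ge hP.2⟩

lemma mudig_eq_zero_of_lt {n i : ℕ} (h : n < i) : mudig n i = 0 := by
  induction n using Nat.strong_induction_on generalizing i with
  | _ n ih =>
    have hmax : maxMu n ≤ n := Nat.findGreatest_le n
    have hmu : 0 < mu (maxMu n) := (Nat.zero_le _).trans_lt (lt_mu _)
    rw [mudig]
    split_ifs with hn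
    · rfl
    · dsimp only
      split_ifs
      · simp only [ite_eq_right_iff]
        omega
      · simp only [Nat.add_eq_zero_iff, ite_eq_right_iff]
        exact ⟨by omega, ih _ (by omega) (by omega)⟩

lemma phi_eq_one_add_phi_sub_mu {n ℓ : ℕ} (hℓ : 1 ≤ ℓ) (hlo : mu ℓ ≤ n) (hhi : n < mu (ℓ + 1))
    (hne : n - mu ℓ ≠ mu ℓ) : phi n = 1 + phi (n - mu ℓ) := by
  have hmax : maxMu n = ℓ := maxMu_eq_of_mu_le_of_lt hℓ hlo hhi
  have h5 : 5 ≤ mu ℓ := mu_strictMono.monotone hℓ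
  have hdig : mudig n = fun i => (if i = ℓ then 1 else 0) + mudig (n - mu ℓ) i := by
    rw [mudig, dif_neg (by omega)]
    simp only [hmax, if_neg hne]
  have hℓn : ℓ ∈ Finset.Icc 1 n := Finset.mem_Icc.2 ⟨hℓ, (lt_mu ℓ).le.trans hlo⟩
  rw [phi, hdig, Finset.sum_add_distrib, Finset.sum_ite_eq', if_pos hℓn, phi]
  congr 1
  exact (Finset.sum_subset (Finset.Icc_subset_Icc le_rfl (Nat.sub_le n _))
    fun i hi hi' => mudig_eq_zero_of_lt (by simp_all)).symm

lemma phi_mu {k : ℕ} (hk : 1 ≤ k) : phi (mu k) = 1 := by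
  have := mu_succ k
  have : 5 ≤ mu k := mu_strictMono.monotone hk
  rw [phi_eq_one_add_phi_sub_mu hk le_rfl (by omega) (by rw [Nat.sub_self]; omega), Nat.sub_self]
  rfl

lemma phi_two_pow_add_two_add {n j : ℕ} (hj : j + 3 ≤ 2 ^ (n + 1)) :
    phi (2 ^ (n + 2) + j) = 1 + phi (2 ^ n + (j + 1)) := by
  have hn : 1 ≤ n := by
    by_contra! h
    simp_all
  have h1 := mu_add_one_eq_three_mul_two_pow n
  have h2 := mu_add_one_eq_three_mul_two_pow (n + 1)
  simp only [pow_succ] at *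
  rw [phi_eq_one_add_phi_sub_mu hn (by omega) (by omega) (by omega)]
  congr 2
  omega

lemma phi_two_pow_add_two_mul_add {m c j : ℕ} (hj : j + c + 2 ≤ 2 ^ (m + 1)) :
    phi (2 ^ (m + 2 * c) + j) = c + phi (2 ^ m + (j + c)) := by
  induction c generalizing j with
  | zero => simp
  | succ c ih =>
    have hpow : 2 ^ (m + 1) ≤ 2 ^ (m + 2 * c + 1) := Nat.pow_le_pow_right two_pos (by omega)
    rw [show m + 2 * (c + 1) = m + 2 * c + 2 by ring, phi_two_pow_add_two_add (by omega),
      ih (by omega), show j + 1 + c = j + (c + 1) by omega]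
    omega

theorem phi_two_pow_family {k : ℕ} (hk : 1 ≤ k) : phi (2 ^ (2 ^ (k + 1) + k - 1)) = 2 ^ k := by
  have hpow : 2 ^ (k + 1) = 2 * 2 ^ k := pow_succ' 2 k
  have hpos := Nat.one_le_two_pow (n := k)
  have hmu := mu_add_one_eq_three_mul_two_pow k
  have := phi_two_pow_add_two_mul_add (m := k + 1) (c := 2 ^ k - 1) (j := 0) (by omega)
  rw [show k + 1 + 2 * (2 ^ k - 1) = 2 ^ (k + 1) + k - 1 by omega, add_zero,
    show 2 ^ (k + 1) + (0 + (2 ^ k - 1)) = mu k by omega, phi_mu hk] at this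
  omega

lemma le_two_mul_phi_two_pow (h : ℕ) : h ≤ 2 * phi (2 ^ h) + Nat.log 2 h + 1 := by
  -- run the chain from `2^h` down to the exponent `h - 2c ∈ {log₂ h, log₂ h + 1}`
  obtain ⟨c, hc⟩ : ∃ c, c = (h - Nat.log 2 h) / 2 := ⟨_, rfl⟩
  have hL : h < 2 ^ (Nat.log 2 h + 1) := Nat.lt_pow_succ_log_self one_lt_two h
  have hL2 : 2 ≤ 2 ^ (Nat.log 2 h + 1) := Nat.le_self_pow (Nat.succ_ne_zero _) 2
  have hm : Nat.log 2 h + 1 ≤ h - 2 * c + 1 := by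
    have := Nat.log_le_self 2 h
    omega
  have hpow : 2 ^ (Nat.log 2 h + 1) ≤ 2 ^ (h - 2 * c + 1) := Nat.pow_le_pow_right two_pos hm
  have := phi_two_pow_add_two_mul_add (m := h - 2 * c) (c := c) (j := 0) (by omega)
  rw [show h - 2 * c + 2 * c = h by omega, add_zero] at this
  omega

lemma natLog_le_logb_add_two (h : ℕ) : (Nat.log 2 h : ℝ) ≤ Real.logb 2 (h + 2) := by
  have : 2 ^ Nat.log 2 h ≤ h + 2 := (Nat.pow_log_le_add_one 2 h).trans (Nat.le_succ _)
  rw [Real.le_logb_iff_rpow_le one_lt_two (by positivity), Real.rpow_natCast]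
  exact_mod_cast this

lemma logb_add_two_pos (h : ℕ) : 0 < Real.logb 2 ((h : ℝ) + 2) :=
  Real.logb_pos one_lt_two (by linarith [h.cast_nonneg (α := ℝ)])

lemma tendsto_logb_add_two : Tendsto (fun h : ℕ => Real.logb 2 ((h : ℝ) + 2)) atTop atTop :=
  (Real.tendsto_logb_atTop one_lt_two).comp
    (tendsto_atTop_add_const_right _ _ tendsto_natCast_atTop_atTop)

lemma neg_one_sub_le_alphaF (h : ℕ) : -1 - 3 / Real.logb 2 (h + 2) ≤ alphaF h := by
  have hpos := logb_add_two_pos h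
  have hlog := natLog_le_logb_add_two h
  have hphi : (h : ℝ) ≤ 2 * phi (2 ^ h) + Nat.log 2 h + 1 := by
    exact_mod_cast le_two_mul_phi_two_pow h
  rw [alphaF, le_div_iff₀ hpos, sub_mul, div_mul_cancel₀ _ hpos.ne']
  linarith

lemma tendsto_neg_one_sub_div_logb :
    Tendsto (fun h : ℕ => -1 - 3 / Real.logb 2 ((h : ℝ) + 2)) atTop (𝓝 (-1)) := by
  simpa using tendsto_const_nhds.sub (tendsto_logb_add_two.const_div_atTop 3)

lemma alphaF_family_le {k : ℕ} (hk : 1 ≤ k) :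
    alphaF (2 ^ (k + 1) + k - 1) ≤ -1 + 1 / ((k : ℝ) + 2) := by
  have hlt := Nat.lt_two_pow_self (n := k + 1)
  have hH : ((2 ^ (k + 1) + k - 1 : ℕ) : ℝ) + 2 = 2 ^ (k + 1) + (k + 1) := by
    have : 2 ^ (k + 1) + k - 1 + 2 = 2 ^ (k + 1) + (k + 1) := by omega
    exact_mod_cast this
  have hle : (2 : ℝ) ^ (k + 1) + (k + 1) ≤ 2 ^ ((k : ℝ) + 2) := by
    have : 2 ^ (k + 1) + (k + 1) ≤ 2 ^ (k + 2) := by rw [pow_succ 2 (k + 1)]; omega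
    rw [show (k : ℝ) + 2 = ((k + 2 : ℕ) : ℝ) by push_cast; ring, Real.rpow_natCast]
    exact_mod_cast this
  have hpos := logb_add_two_pos (2 ^ (k + 1) + k - 1)
  rw [hH] at hpos
  have hlog : Real.logb 2 (2 ^ (k + 1) + (k + 1)) ≤ k + 2 :=
    (Real.logb_le_iff_le_rpow one_lt_two (by positivity)).2 hle
  rw [alphaF, phi_two_pow_family hk, hH, show -1 + 1 / ((k : ℝ) + 2) = -(k + 1) / (k + 2) by
    field_simp; ring]
  push_cast
  rw [show (2 : ℝ) * 2 ^ k - (2 ^ (k + 1) + (k + 1)) = -(k + 1) by ring, neg_div, neg_div,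
    neg_le_neg_iff]
  exact div_le_div_of_nonneg_left (by positivity) hpos hlog

lemma tendsto_two_pow_succ_add_sub_one : Tendsto (fun k : ℕ => 2 ^ (k + 1) + k - 1) atTop atTop :=
  tendsto_atTop_mono (fun k => show k ≤ 2 ^ (k + 1) + k - 1 by
    have := Nat.one_le_two_pow (n := k + 1); omega) tendsto_id

theorem tendsto_alphaF_family :
    Tendsto (fun k : ℕ => alphaF (2 ^ (k + 1) + k - 1)) atTop (𝓝 (-1)) := by
  have hupper : Tendsto (fun k : ℕ => -1 + 1 / ((k : ℝ) + 2)) atTop (𝓝 (-1)) := by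
    simpa using (tendsto_const_nhds (x := (-1 : ℝ))).add
      ((tendsto_atTop_add_const_right _ (2 : ℝ) tendsto_natCast_atTop_atTop).const_div_atTop 1)
  exact tendsto_of_tendsto_of_tendsto_of_le_of_le'
    (tendsto_neg_one_sub_div_logb.comp tendsto_two_pow_succ_add_sub_one) hupper
    (Eventually.of_forall fun k => by exact_mod_cast neg_one_sub_le_alphaF _)
    ((eventually_ge_atTop 1).mono fun _ => alphaF_family_le)

theorem liminf_alphaF : liminf alphaF atTop = -1 := by
  have hlower := tendsto_neg_one_sub_div_logb
  have hfamily := tendsto_alphaF_family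
  have hbdd : atTop.IsBoundedUnder (· ≥ ·) alphaF :=
    hlower.isBoundedUnder_ge.mono_ge (Eventually.of_forall neg_one_sub_le_alphaF)
  have hcobdd : atTop.IsCoboundedUnder (· ≥ ·) alphaF :=
    hfamily.isCoboundedUnder_ge.mono (map_mono tendsto_two_pow_succ_add_sub_one)
  refine le_antisymm ?_ ?_
  · calc liminf alphaF atTop
        ≤ liminf (alphaF ∘ fun k : ℕ => 2 ^ (k + 1) + k - 1) atTop :=
          tendsto_two_pow_succ_add_sub_one.liminf_le_liminf_comp hfamily.isCoboundedUnder_ge hbdd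
      _ = -1 := hfamily.liminf_eq
  · calc (-1 : ℝ) = liminf (fun h : ℕ => -1 - 3 / Real.logb 2 ((h : ℝ) + 2)) atTop :=
          hlower.liminf_eq.symm
      _ ≤ liminf alphaF atTop :=
          liminf_le_liminf (Eventually.of_forall neg_one_sub_le_alphaF) hlower.isBoundedUnder_ge
            hcobdd

/-- For the family `h_k = 2^{k+1} + k − 1`, `φ(2^{h_k}) = 2^k`; consequently
`α(h_k) → −1` as `k → ∞`, and `liminf_{h→∞} α(h) = −1`. -/
theorem alpha_liminf :
    (∀ k : ℕ, 1 ≤ k → phi (2 ^ (2 ^ (k + 1) + k - 1)) = 2 ^ k) ∧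
    Filter.Tendsto (fun k : ℕ => alphaF (2 ^ (k + 1) + k - 1))
      Filter.atTop (nhds (-1)) ∧
    Filter.liminf alphaF Filter.atTop = -1 :=
  ⟨fun _ => phi_two_pow_family, tendsto_alphaF_family, liminf_alphaF⟩
end
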